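/- arXiv:0803.2423 — 5 statements merged into one kernel-verified Lean document; each statement's English description precedes it below -/
import Mathlib

section
/- Every C-algebra (A,B) is semisimple; equivalently, the Jacobson radical of the algebra A is zero. -/
open Matrix
open scoped BigOperators

/-- `(A, B)` is a (possibly noncommutative) C-algebra with degree map `deg` and
structure constants `lam` :
(I) `1 ∈ B`, `B` is a basis, and the structure constants are real;
(II) `star` is a conjugate-linear involutory anti-automorphism with `B* = B`
(encoded by the `StarRing`/`StarModule` instances and `star_mem`);
(III) `λ_{a b 1} = δ_{a, b*} |a|` with `|a| > 0`;
(IV) `deg` is a `ℂ`-algebra homomorphism with `deg b = |b|` and `deg (x*) = conj (deg x)`. -/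
structure IsCAlgebra (A : Type*) [Ring A] [Algebra ℂ A] [StarRing A] [StarModule ℂ A]
    (B : Finset A) (deg : A →ₐ[ℂ] ℂ) (lam : A → A → A → ℝ) : Prop where
  indep : LinearIndependent ℂ (fun x : ↥(B : Set A) => (x : A))
  span_top : Submodule.span ℂ (B : Set A) = ⊤
  one_mem : (1 : A) ∈ B
  star_mem : ∀ b ∈ B, star b ∈ B
  struct : ∀ a ∈ B, ∀ b ∈ B, a * b = ∑ c ∈ B, (lam a b c : ℂ) • c
  lam_one_eq : ∀ a ∈ B, (lam a (star a) 1 : ℂ) = deg a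
  lam_one_ne : ∀ a ∈ B, ∀ b ∈ B, a ≠ star b → lam a b 1 = 0
  deg_pos : ∀ a ∈ B, 0 < lam a (star a) 1
  deg_star : ∀ x : A, deg (star x) = (starRingEnd ℂ) (deg x)

/-- A table algebra is a C-algebra with nonnegative structure constants. -/
structure IsTableAlgebra (A : Type*) [Ring A] [Algebra ℂ A] [StarRing A] [StarModule ℂ A]
    (B : Finset A) (deg : A →ₐ[ℂ] ℂ) (lam : A → A → A → ℝ)
    extends IsCAlgebra A B deg lam : Prop where
  lam_nonneg : ∀ a ∈ B, ∀ b ∈ B, ∀ c ∈ B, 0 ≤ lam a b c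

/-- The standard feasible trace: `ζ(1) = |B⁺|` and `ζ(b) = 0` for `1 ≠ b ∈ B`. -/
def IsStdTrace {A : Type*} [Ring A] [Algebra ℂ A] (B : Finset A) (deg : A →ₐ[ℂ] ℂ)
    (ζ : A →ₗ[ℂ] ℂ) : Prop :=
  ζ 1 = (∑ b ∈ B, deg b) ∧ ∀ b ∈ B, b ≠ 1 → ζ b = 0

/-- `χ` is an irreducible character of `A`: the trace of a surjective (hence irreducible)
matrix representation of positive degree. -/
def IsIrrChar (A : Type*) [Ring A] [Algebra ℂ A] (χ : A → ℂ) : Prop :=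
  ∃ (n : ℕ) (D : A →ₐ[ℂ] Matrix (Fin n) (Fin n) ℂ),
    0 < n ∧ Function.Surjective ⇑D ∧ ∀ a : A, χ a = (D a).trace

/-- `φ` agrees on the corner algebra `H = eAe = {x | e*x*e = x}` with an irreducible
character of `H`: there is an irreducible (i.e. surjective) unital matrix representation
of `H` of positive degree whose trace is `φ` on `H`. -/
def IsIrrCharOn {A : Type*} [Ring A] [Algebra ℂ A] (e : A) (φ : A → ℂ) : Prop :=
  ∃ (n : ℕ) (D : A → Matrix (Fin n) (Fin n) ℂ),
    0 < n ∧ D e = 1 ∧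
    (∀ x y : A, e * x * e = x → e * y * e = y → D (x + y) = D x + D y) ∧
    (∀ (c : ℂ) (x : A), e * x * e = x → D (c • x) = c • D x) ∧
    (∀ x y : A, e * x * e = x → e * y * e = y → D (x * y) = D x * D y) ∧
    (∀ M : Matrix (Fin n) (Fin n) ℂ, ∃ x : A, e * x * e = x ∧ D x = M) ∧
    (∀ x : A, e * x * e = x → φ x = (D x).trace)

/-- `C` is a closed subset of the basis `B` : `C` is nonempty and every basis element
occurring with nonzero coefficient in `c* ⬝ d` (for `c, d ∈ C`) lies in `C`.
Here `coord b x` is the coefficient of the basis element `b` in `x`. -/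
def IsClosedSubset {A : Type*} [Ring A] [Algebra ℂ A] [StarRing A] [StarModule ℂ A]
    (B C : Finset A) (coord : A → A → ℂ) : Prop :=
  C.Nonempty ∧ C ⊆ B ∧ ∀ c ∈ C, ∀ d ∈ C, ∀ b ∈ B, coord b (star c * d) ≠ 0 → b ∈ C

open scoped Classical in
/-- The double coset `CbC` : basis elements occurring with nonzero coefficient
in `C⁺ * b * C⁺`. -/
noncomputable def DCoset {A : Type*} [Ring A] [Algebra ℂ A]
    (B : Finset A) (coord : A → A → ℂ) (C : Finset A) (b : A) : Finset A :=
  B.filter fun y => coord y ((∑ c ∈ C, c) * b * (∑ c ∈ C, c)) ≠ 0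

/-- The quotient basis element `b/C = |C⁺|⁻¹ (CbC)⁺`. -/
noncomputable def quo {A : Type*} [Ring A] [Algebra ℂ A]
    (B : Finset A) (deg : A →ₐ[ℂ] ℂ) (coord : A → A → ℂ) (C : Finset A) (b : A) : A :=
  (∑ c ∈ C, deg c)⁻¹ • ∑ x ∈ DCoset B coord C b, x

/-! Let `τ` be the coefficient of `1` with respect to `B`. Since `B* = B` and
`λ_{a* b 1} = δ_{a b} |a*|`, we have `τ (x*) = conj (τ x)` and `τ (x* x) = ∑_b |x_b|² |b*| > 0`
for `x ≠ 0`, so `⟪x, y⟫ = τ (x* y)` is an inner product on `A`. As `⟪u, a y⟫ = ⟪a* u, y⟫`, the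
orthogonal complement of a left ideal is again a left ideal, hence every left ideal has a
complement and `A` is semisimple; semisimple rings have zero Jacobson radical. -/

section FaithfulPositiveFunctional

variable {A : Type*} [Ring A] [Algebra ℂ A] [StarRing A] [StarModule ℂ A]

@[reducible] noncomputable def innerCoreOfFaithfulPositive (τ : A →ₗ[ℂ] ℂ)
    (hstar : ∀ x, τ (star x) = starRingEnd ℂ (τ x)) (hpos : ∀ x, x ≠ 0 → 0 < (τ (star x * x)).re) :
    InnerProductSpace.Core ℂ A where
  inner x y := τ (star x * y)
  conj_inner_symm x y := by
    simp only [← hstar, star_mul, star_star]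
  re_inner_nonneg x := by
    rcases eq_or_ne x 0 with rfl | hx
    · simp
    · exact (hpos x hx).le
  add_left x y z := by
    simp only [star_add, add_mul, map_add]
  smul_left x y r := by
    simp only [star_smul, smul_mul_assoc, map_smul, smul_eq_mul, starRingEnd_apply]
  definite x hx := by
    by_contra hne
    simpa [hx] using hpos x hne

theorem exists_isCompl_ideal_of_faithfulPositive [FiniteDimensional ℂ A] (τ : A →ₗ[ℂ] ℂ)
    (hstar : ∀ x, τ (star x) = starRingEnd ℂ (τ x)) (hpos : ∀ x, x ≠ 0 → 0 < (τ (star x * x)).re)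
    (I : Ideal A) : ∃ J : Ideal A, IsCompl I J := by
  let core := innerCoreOfFaithfulPositive τ hstar hpos
  let : NormedAddCommGroup A := core.toNormedAddCommGroup
  let : InnerProductSpace ℂ A := InnerProductSpace.ofCore core.toCore
  let K : Submodule ℂ A := I.restrictScalars ℂ
  let J : Ideal A :=
    { toAddSubmonoid := Kᗮ.toAddSubmonoid
      smul_mem' a y hy := by
        refine (Submodule.mem_orthogonal K _).2 fun u hu => ?_
        have hau : star a * u ∈ K := I.mul_mem_left (star a) hu
        have := (Submodule.mem_orthogonal K y).1 hy _ hau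
        change τ (star (star a * u) * y) = 0 at this
        change τ (star u * (a * y)) = 0
        simpa [mul_assoc] using this }
  have hK : IsCompl K Kᗮ := K.isCompl_orthogonal
  refine ⟨J, ?_, ?_⟩
  · exact Submodule.disjoint_def.2 fun x hxI hxJ => Submodule.disjoint_def.1 hK.disjoint x hxI hxJ
  · rw [codisjoint_iff, eq_top_iff]
    intro x _
    have hx : x ∈ K ⊔ Kᗮ := hK.codisjoint.eq_top ▸ Submodule.mem_top
    obtain ⟨u, hu, v, hv, rfl⟩ := Submodule.mem_sup.1 hx
    exact Submodule.add_mem_sup hu hv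

theorem isSemisimpleRing_of_faithfulPositive [FiniteDimensional ℂ A] (τ : A →ₗ[ℂ] ℂ)
    (hstar : ∀ x, τ (star x) = starRingEnd ℂ (τ x)) (hpos : ∀ x, x ≠ 0 → 0 < (τ (star x * x)).re) :
    IsSemisimpleRing A where
  exists_isCompl := exists_isCompl_ideal_of_faithfulPositive τ hstar hpos

end FaithfulPositiveFunctional

namespace IsCAlgebra

variable {A : Type*} [Ring A] [Algebra ℂ A] [StarRing A] [StarModule ℂ A]
  {B : Finset A} {deg : A →ₐ[ℂ] ℂ} {lam : A → A → A → ℝ}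

noncomputable def basis (h : IsCAlgebra A B deg lam) : Module.Basis (B : Set A) ℂ A :=
  Module.Basis.mk h.indep (by simpa using h.span_top.ge)

@[simp]
theorem basis_apply (h : IsCAlgebra A B deg lam) (i : (B : Set A)) : h.basis i = i :=
  Module.Basis.mk_apply h.indep _ i

theorem finiteDimensional (h : IsCAlgebra A B deg lam) : FiniteDimensional ℂ A :=
  h.basis.finiteDimensional_of_finite

noncomputable def unitCoeff (h : IsCAlgebra A B deg lam) : A →ₗ[ℂ] ℂ :=
  h.basis.coord ⟨1, h.one_mem⟩

open scoped Classical in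
theorem unitCoeff_of_mem (h : IsCAlgebra A B deg lam) {b : A} (hb : b ∈ B) :
    h.unitCoeff b = if b = 1 then 1 else 0 := by
  have hb' : b = h.basis ⟨b, hb⟩ := (h.basis_apply ⟨b, hb⟩).symm
  rw [unitCoeff, Module.Basis.coord_apply]
  conv_lhs => rw [hb']
  rw [Module.Basis.repr_self, Finsupp.single_apply]
  simp [Subtype.ext_iff]

theorem unitCoeff_star (h : IsCAlgebra A B deg lam) (x : A) :
    h.unitCoeff (star x) = starRingEnd ℂ (h.unitCoeff x) := by
  have hstar_basis :
      ∀ i, h.unitCoeff (star (h.basis i)) = starRingEnd ℂ (h.unitCoeff (h.basis i)) := fun i => by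
    rw [h.basis_apply, h.unitCoeff_of_mem (h.star_mem _ i.2), h.unitCoeff_of_mem i.2,
      star_eq_iff_star_eq, star_one]
    by_cases hi : (i : A) = 1 <;> simp [hi, Ne.symm]
  conv_lhs => rw [← h.basis.sum_repr x]
  conv_rhs => rw [← h.basis.sum_repr x]
  simp [star_sum, star_smul, hstar_basis, map_sum]

open scoped Classical in
theorem unitCoeff_star_mul (h : IsCAlgebra A B deg lam) {a b : A} (ha : a ∈ B) (hb : b ∈ B) :
    h.unitCoeff (star a * b) = if a = b then (lam (star a) a 1 : ℂ) else 0 := by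
  have hsingle : ∀ c ∈ B, c ≠ 1 → h.unitCoeff ((lam (star a) b c : ℂ) • c) = 0 := fun c hc hc1 => by
    rw [map_smul, h.unitCoeff_of_mem hc, if_neg hc1, smul_zero]
  rw [h.struct _ (h.star_mem a ha) b hb, map_sum, Finset.sum_eq_single_of_mem 1 h.one_mem hsingle,
    map_smul, h.unitCoeff_of_mem h.one_mem, if_pos rfl, smul_eq_mul, mul_one]
  split_ifs with hab
  · rw [hab]
  · exact_mod_cast h.lam_one_ne _ (h.star_mem a ha) b hb fun hab' => hab (star_injective hab')

theorem unitCoeff_star_mul_self (h : IsCAlgebra A B deg lam) (x : A) :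
    h.unitCoeff (star x * x) =
      ((∑ i, Complex.normSq (h.basis.repr x i) * lam (star (i : A)) i 1 : ℝ) : ℂ) := by
  classical
  set c := h.basis.repr x
  have hx : x = ∑ j, c j • h.basis j := (h.basis.sum_repr x).symm
  have hstar : star x = ∑ i, starRingEnd ℂ (c i) • star (h.basis i) := by
    conv_lhs => rw [hx]
    simp only [star_sum, star_smul, starRingEnd_apply]
  have hgram : ∀ i j, h.unitCoeff (star (h.basis i) * h.basis j) =
      if i = j then (lam (star (i : A)) i 1 : ℂ) else 0 := fun i j => by
    simp only [h.basis_apply, h.unitCoeff_star_mul i.2 j.2, Subtype.coe_inj]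
  calc h.unitCoeff (star x * x)
      = ∑ i, ∑ j, starRingEnd ℂ (c i) * c j * h.unitCoeff (star (h.basis i) * h.basis j) := by
        rw [hstar]
        conv_lhs => rw [hx]
        simp only [Finset.sum_mul_sum, smul_mul_smul_comm, map_sum, map_smul, smul_eq_mul]
    _ = ∑ i, starRingEnd ℂ (c i) * c i * (lam (star (i : A)) i 1 : ℂ) := by
        simp only [hgram, mul_ite, mul_zero, Finset.sum_ite_eq, Finset.mem_univ, if_true]
    _ = _ := by
        push_cast
        simp only [Complex.normSq_eq_conj_mul_self]

theorem unitCoeff_star_mul_self_re_pos (h : IsCAlgebra A B deg lam) {x : A} (hx : x ≠ 0) :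
    0 < (h.unitCoeff (star x * x)).re := by
  have hlam : ∀ i : (B : Set A), 0 < lam (star (i : A)) i 1 := fun i => by
    simpa using h.deg_pos _ (h.star_mem _ i.2)
  obtain ⟨i, hi⟩ : ∃ i, h.basis.repr x i ≠ 0 := by
    by_contra! hzero
    exact hx (h.basis.ext_elem_iff.2 (by simpa using hzero))
  rw [h.unitCoeff_star_mul_self, Complex.ofReal_re]
  refine Finset.sum_pos' (fun j _ => mul_nonneg (Complex.normSq_nonneg _) (hlam j).le)
    ⟨i, Finset.mem_univ i, mul_pos (Complex.normSq_pos.2 hi) (hlam i)⟩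

theorem isSemisimpleRing (h : IsCAlgebra A B deg lam) : IsSemisimpleRing A :=
  have := h.finiteDimensional
  isSemisimpleRing_of_faithfulPositive h.unitCoeff h.unitCoeff_star
    fun _ hx => h.unitCoeff_star_mul_self_re_pos hx

end IsCAlgebra

/-- Every C-algebra `(A,B)` is semisimple; equivalently the Jacobson
radical of `A` is zero. -/
theorem stmt0 {A : Type*} [Ring A] [Algebra ℂ A] [StarRing A] [StarModule ℂ A]
    (B : Finset A) (deg : A →ₐ[ℂ] ℂ) (lam : A → A → A → ℝ)
    (hCA : IsCAlgebra A B deg lam) :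
    IsSemisimpleRing A ∧ (⊥ : Ideal A).jacobson = ⊥ :=
  have := hCA.isSemisimpleRing
  ⟨this, Ideal.jacobson_bot.trans (IsSemisimpleRing.jacobson_eq_bot A)⟩
end

section
/- Let (A,B) be a C-algebra. For all φ, ψ ∈ Irr(A) the orthogonality relation holds: |B⁺|⁻¹ · Σ_{b∈B} φ(b*)ψ(b)/|b*| = δ_{φψ} · φ(1_A)/ζ_φ. -/
open Matrix
open scoped BigOperators

/-! The standard feasible trace `ζ` is symmetric, and `b ↦ b*` and `b ↦ (|b| |B⁺|)⁻¹ b` are dual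
bases of `A` for the form `(x, y) ↦ ζ (x y)`. Hence for matrix representations `E`, `D` of `A` the
averaged map `M ↦ ∑_b E(b*) M D(b) / (|b| |B⁺|)` intertwines `D` and `E`; by Schur's lemma it
vanishes when the characters differ, and its trace against the matrix units is the orthogonality
sum. For `φ = ψ`, evaluate `ζ = ∑_χ ζ_χ χ` at `∑_b φ(b) b* / (|b| |B⁺|)`: every `χ ≠ φ` drops out,
leaving `ζ_φ` times the sum, while the dual-basis expansion of `1` gives `φ(1)`. -/

open Finset

section Schur

variable {K : Type*} [Field K] {ι κ : Type*} [Fintype ι] [DecidableEq ι] [Fintype κ] [DecidableEq κ]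

theorem Matrix.exists_mulVec_eq_of_ne_zero {v : ι → K} (hv : v ≠ 0) (w : ι → K) :
    ∃ M : Matrix ι ι K, M *ᵥ v = w := by
  obtain ⟨i, hi⟩ := Function.ne_iff.mp hv
  refine ⟨vecMulVec w (Pi.single i (v i)⁻¹), ?_⟩
  rw [vecMulVec_mulVec, single_dotProduct, inv_mul_cancel₀ hi]
  simp

theorem Submodule.eq_bot_or_eq_top_of_forall_mulVec_mem (p : Submodule K (ι → K))
    (hp : ∀ M : Matrix ι ι K, ∀ v ∈ p, M *ᵥ v ∈ p) : p = ⊥ ∨ p = ⊤ := by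
  refine or_iff_not_imp_left.mpr fun hbot => ?_
  obtain ⟨v, hv, hv0⟩ := p.ne_bot_iff.mp hbot
  refine eq_top_iff'.mpr fun w => ?_
  obtain ⟨M, rfl⟩ := Matrix.exists_mulVec_eq_of_ne_zero hv0 w
  exact hp M v hv

theorem Matrix.trace_eq_of_intertwining {A : Type*} [Ring A] [Algebra K A]
    {D : A →ₐ[K] Matrix ι ι K} {E : A →ₐ[K] Matrix κ κ K}
    (hD : Function.Surjective D) (hE : Function.Surjective E)
    {T : Matrix κ ι K} (hT : ∀ x, E x * T = T * D x) (hT0 : T ≠ 0) (x : A) :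
    (E x).trace = (D x).trace := by
  have hker : LinearMap.ker T.mulVecLin = ⊥ := by
    refine (Submodule.eq_bot_or_eq_top_of_forall_mulVec_mem _ fun M v hv => ?_).resolve_right
      fun h => hT0 ?_
    · obtain ⟨y, rfl⟩ := hD M
      rw [LinearMap.mem_ker, mulVecLin_apply] at hv ⊢
      rw [mulVec_mulVec, ← hT, ← mulVec_mulVec, hv, mulVec_zero]
    · exact toLin'.injective (by rw [toLin'_apply', LinearMap.ker_eq_top.mp h, map_zero])
  have hrange : LinearMap.range T.mulVecLin = ⊤ := by
    refine (Submodule.eq_bot_or_eq_top_of_forall_mulVec_mem _ fun M v hv => ?_).resolve_left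
      fun h => hT0 ?_
    · obtain ⟨y, rfl⟩ := hE M
      obtain ⟨w, rfl⟩ := hv
      exact ⟨D y *ᵥ w, by simp only [mulVecLin_apply, mulVec_mulVec, hT]⟩
    · exact toLin'.injective (by rw [toLin'_apply', LinearMap.range_eq_bot.mp h, map_zero])
  let e := LinearEquiv.ofBijective T.mulVecLin
    ⟨LinearMap.ker_eq_bot.mp hker, LinearMap.range_eq_top.mp hrange⟩
  have hconj : (E x).mulVecLin = e.conj (D x).mulVecLin := by
    refine LinearMap.ext fun w => ?_
    obtain ⟨w, rfl⟩ := e.surjective w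
    change E x *ᵥ (T *ᵥ w) = T *ᵥ (D x *ᵥ e.symm (e w))
    rw [e.symm_apply_apply, mulVec_mulVec, mulVec_mulVec, hT]
  rw [← trace_toLin'_eq, ← trace_toLin'_eq, toLin'_apply', toLin'_apply', hconj,
    LinearMap.trace_conj']

theorem Matrix.sum_sum_mul_single_mul_apply (X : Matrix κ κ K) (Y : Matrix ι ι K) :
    ∑ j, ∑ k, (X * (single j k 1 : Matrix κ ι K) * Y) j k = X.trace * Y.trace := by
  simp [mul_apply, single, ite_and, trace, Finset.sum_mul_sum]

end Schur

theorem IsIrrChar.exists_linearMap {A : Type*} [Ring A] [Algebra ℂ A] {χ : A → ℂ}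
    (hχ : IsIrrChar A χ) : ∃ L : A →ₗ[ℂ] ℂ, ⇑L = χ := by
  obtain ⟨n, D, -, -, hD⟩ := hχ
  exact ⟨(Matrix.traceLinearMap (Fin n) ℂ ℂ).comp D.toLinearMap, funext fun a => (hD a).symm⟩

structure IsTraceDualBases {R A ι : Type*} [CommSemiring R] [Semiring A] [Algebra R A]
    (τ : A →ₗ[R] R) (s : Finset ι) (u v : ι → A) : Prop where
  map_mul_comm : ∀ x y, τ (x * y) = τ (y * x)
  sum_smul_left : ∀ x, ∑ i ∈ s, τ (x * v i) • u i = x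
  sum_smul_right : ∀ x, ∑ i ∈ s, τ (u i * x) • v i = x

namespace IsTraceDualBases

section Casimir

variable {R A N ι : Type*} [CommSemiring R] [Semiring A] [Algebra R A] [AddCommMonoid N]
  [Module R N] {τ : A →ₗ[R] R} {s : Finset ι} {u v : ι → A}

theorem sum_mul_left_eq_sum_mul_right (h : IsTraceDualBases τ s u v)
    (f : A →ₗ[R] A →ₗ[R] N) (a : A) :
    ∑ i ∈ s, f (a * u i) (v i) = ∑ i ∈ s, f (u i) (v i * a) :=
  calc ∑ i ∈ s, f (a * u i) (v i)
      = ∑ i ∈ s, ∑ j ∈ s, τ (a * u i * v j) • f (u j) (v i) := by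
        refine sum_congr rfl fun i _ => ?_
        conv_lhs => rw [← h.sum_smul_left (a * u i)]
        simp only [map_sum, map_smul, LinearMap.sum_apply, LinearMap.smul_apply]
    _ = ∑ j ∈ s, ∑ i ∈ s, τ (u i * (v j * a)) • f (u j) (v i) := by
        rw [sum_comm]
        simp only [mul_assoc, h.map_mul_comm a]
    _ = ∑ j ∈ s, f (u j) (v j * a) := by
        refine sum_congr rfl fun j _ => ?_
        conv_rhs => rw [← h.sum_smul_right (v j * a)]
        simp only [map_sum, map_smul]

end Casimir

variable {A ι : Type*} [Ring A] [Algebra ℂ A] {τ : A →ₗ[ℂ] ℂ} {s : Finset ι} {u v : ι → A}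

theorem sum_irrChar_mul_eq_zero (h : IsTraceDualBases τ s u v) {φ ψ : A → ℂ}
    (hφ : IsIrrChar A φ) (hψ : IsIrrChar A ψ) (hne : φ ≠ ψ) :
    ∑ i ∈ s, φ (u i) * ψ (v i) = 0 := by
  obtain ⟨m, E, -, hE, hφE⟩ := hφ
  obtain ⟨n, D, -, hD, hψD⟩ := hψ
  let T (M : Matrix (Fin m) (Fin n) ℂ) := ∑ i ∈ s, E (u i) * M * D (v i)
  have hT (M : Matrix (Fin m) (Fin n) ℂ) (x : A) : E x * T M = T M * D x := by
    let f : A →ₗ[ℂ] A →ₗ[ℂ] Matrix (Fin m) (Fin n) ℂ :=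
      LinearMap.mk₂ ℂ (fun x y => E x * M * D y) (by simp [Matrix.add_mul]) (by simp)
        (by simp [Matrix.mul_add]) (by simp)
    simpa [f, T, Matrix.mul_sum, Matrix.sum_mul, Matrix.mul_assoc] using
      h.sum_mul_left_eq_sum_mul_right f x
  have hT0 (M : Matrix (Fin m) (Fin n) ℂ) : T M = 0 := by
    by_contra h0
    exact hne (funext fun x => by
      rw [hφE, hψD]; exact Matrix.trace_eq_of_intertwining hD hE (hT M) h0 x)
  calc ∑ i ∈ s, φ (u i) * ψ (v i)
      = ∑ i ∈ s, ∑ j, ∑ k,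
          (E (u i) * (Matrix.single j k 1 : Matrix (Fin m) (Fin n) ℂ) * D (v i)) j k := by
        simp only [hφE, hψD, Matrix.sum_sum_mul_single_mul_apply]
    _ = ∑ j, ∑ k, T (Matrix.single j k 1) j k := by
        simp only [T, Matrix.sum_apply]
        rw [sum_comm]
        exact sum_congr rfl fun j _ => sum_comm
    _ = 0 := by simp [hT0]

theorem mul_sum_irrChar_mul_self (h : IsTraceDualBases τ s u v)
    {Irr : Finset (A → ℂ)} (hIrr : ∀ χ ∈ Irr, IsIrrChar A χ) {m : (A → ℂ) → ℂ}
    (hdec : ∀ a, τ a = ∑ χ ∈ Irr, m χ * χ a) {φ : A → ℂ} (hφ : φ ∈ Irr) :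
    m φ * ∑ i ∈ s, φ (u i) * φ (v i) = φ 1 := by
  have hχ : ∀ χ ∈ Irr, χ (∑ i ∈ s, φ (v i) • u i) = ∑ i ∈ s, χ (u i) * φ (v i) := by
    intro χ hχ
    obtain ⟨L, rfl⟩ := (hIrr χ hχ).exists_linearMap
    simp [mul_comm]
  obtain ⟨L, rfl⟩ := (hIrr φ hφ).exists_linearMap
  calc m L * ∑ i ∈ s, L (u i) * L (v i) = τ (∑ i ∈ s, L (v i) • u i) := by
        rw [hdec, sum_eq_single_of_mem _ hφ, hχ _ hφ]
        intro χ hχ' hne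
        rw [hχ χ hχ', h.sum_irrChar_mul_eq_zero (hIrr χ hχ') (hIrr _ hφ) hne, mul_zero]
    _ = L (∑ i ∈ s, τ (u i * 1) • v i) := by simp [mul_comm]
    _ = L 1 := by rw [h.sum_smul_right]

end IsTraceDualBases

namespace IsCAlgebra

variable {A : Type*} [Ring A] [Algebra ℂ A] [StarRing A] [StarModule ℂ A]
  {B : Finset A} {deg : A →ₐ[ℂ] ℂ} {lam : A → A → A → ℝ}

theorem deg_eq (hCA : IsCAlgebra A B deg lam) {b : A} (hb : b ∈ B) :
    deg b = lam b (star b) 1 :=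
  (hCA.lam_one_eq b hb).symm

theorem deg_ne_zero (hCA : IsCAlgebra A B deg lam) {b : A} (hb : b ∈ B) : deg b ≠ 0 := by
  rw [hCA.deg_eq hb]
  exact_mod_cast (hCA.deg_pos b hb).ne'

theorem deg_star_of_mem (hCA : IsCAlgebra A B deg lam) {b : A} (hb : b ∈ B) :
    deg (star b) = deg b := by
  rw [hCA.deg_star b, hCA.deg_eq hb, Complex.conj_ofReal]

theorem sum_deg_ne_zero (hCA : IsCAlgebra A B deg lam) : ∑ b ∈ B, deg b ≠ 0 := by
  have hpos : 0 < ∑ b ∈ B, lam b (star b) 1 :=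
    sum_pos (fun b hb => hCA.deg_pos b hb) ⟨1, hCA.one_mem⟩
  rw [sum_congr rfl fun b hb => hCA.deg_eq hb]
  exact_mod_cast hpos.ne'

theorem lam_one [DecidableEq A] (hCA : IsCAlgebra A B deg lam) {a b : A} (ha : a ∈ B)
    (hb : b ∈ B) :
    (lam a b 1 : ℂ) = if a = star b then deg a else 0 := by
  split_ifs with h
  · subst h
    simpa using hCA.lam_one_eq _ ha
  · rw [hCA.lam_one_ne a ha b hb h, Complex.ofReal_zero]

variable {ζ : A →ₗ[ℂ] ℂ}

theorem stdTrace_mul [DecidableEq A] (hCA : IsCAlgebra A B deg lam) (hζ : IsStdTrace B deg ζ)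
    {a b : A} (ha : a ∈ B) (hb : b ∈ B) :
    ζ (a * b) = if a = star b then deg a * ∑ c ∈ B, deg c else 0 := by
  rw [hCA.struct a ha b hb, map_sum, sum_eq_single_of_mem 1 hCA.one_mem]
  · rw [map_smul, hζ.1, hCA.lam_one ha hb, smul_eq_mul, ite_mul, zero_mul]
  · intro c hc hc1
    rw [map_smul, hζ.2 c hc hc1, smul_zero]

theorem stdTrace_mul_comm (hCA : IsCAlgebra A B deg lam) (hζ : IsStdTrace B deg ζ) (x y : A) :
    ζ (x * y) = ζ (y * x) := by
  classical
  have hB : ∀ a ∈ B, ∀ b ∈ B, ζ (a * b) = ζ (b * a) := by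
    intro a ha b hb
    rw [hCA.stdTrace_mul hζ ha hb, hCA.stdTrace_mul hζ hb ha]
    by_cases h : a = star b
    · subst h
      rw [if_pos (star_star b).symm, if_pos rfl, hCA.deg_star_of_mem hb]
    · rw [if_neg h, if_neg fun h' => h (by rw [h', star_star])]
  have hform : (LinearMap.mul ℂ A).compr₂ ζ = ((LinearMap.mul ℂ A).compr₂ ζ).flip :=
    LinearMap.ext_on hCA.span_top fun a ha => LinearMap.ext_on hCA.span_top fun b hb => hB a ha b hb
  exact LinearMap.congr_fun₂ hform x y

theorem isTraceDualBases (hCA : IsCAlgebra A B deg lam) (hζ : IsStdTrace B deg ζ) :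
    IsTraceDualBases ζ B star fun b => (deg b * ∑ c ∈ B, deg c)⁻¹ • b := by
  classical
  set S := ∑ c ∈ B, deg c
  have hdeg {c : A} (hc : c ∈ B) : deg c * S ≠ 0 :=
    mul_ne_zero (hCA.deg_ne_zero hc) hCA.sum_deg_ne_zero
  refine ⟨hCA.stdTrace_mul_comm hζ, fun x => ?_, fun x => ?_⟩
  · let f : A →ₗ[ℂ] A :=
      ∑ b ∈ B, (ζ ∘ₗ LinearMap.mulRight ℂ ((deg b * S)⁻¹ • b)).smulRight (star b)
    have hf : f = LinearMap.id := LinearMap.ext_on hCA.span_top fun c hc => by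
      simp only [f, LinearMap.sum_apply, LinearMap.smulRight_apply, LinearMap.comp_apply,
        LinearMap.mulRight_apply, mul_smul_comm, map_smul, LinearMap.id_apply]
      rw [sum_eq_single_of_mem (star c) (hCA.star_mem c hc)]
      · rw [hCA.stdTrace_mul hζ hc (hCA.star_mem c hc), if_pos (star_star c).symm,
          hCA.deg_star_of_mem hc, star_star, smul_eq_mul, inv_mul_cancel₀ (hdeg hc), one_smul]
      · intro b hb hbc
        rw [hCA.stdTrace_mul hζ hc hb, if_neg fun h => hbc (by rw [h, star_star]), smul_zero,
          zero_smul]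
    simpa [f] using LinearMap.congr_fun hf x
  · let g : A →ₗ[ℂ] A :=
      ∑ b ∈ B, (ζ ∘ₗ LinearMap.mulLeft ℂ (star b)).smulRight ((deg b * S)⁻¹ • b)
    have hg : g = LinearMap.id := LinearMap.ext_on hCA.span_top fun c hc => by
      simp only [g, LinearMap.sum_apply, LinearMap.smulRight_apply, LinearMap.comp_apply,
        LinearMap.mulLeft_apply, LinearMap.id_apply]
      rw [sum_eq_single_of_mem c hc]
      · rw [hCA.stdTrace_mul hζ (hCA.star_mem c hc) hc, if_pos rfl, hCA.deg_star_of_mem hc,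
          smul_smul, mul_inv_cancel₀ (hdeg hc), one_smul]
      · intro b hb hbc
        rw [hCA.stdTrace_mul hζ (hCA.star_mem b hb) hc, if_neg (star_injective.ne hbc), zero_smul]
    simpa [g] using LinearMap.congr_fun hg x

end IsCAlgebra

/-- orthogonality relation
`|B⁺|⁻¹ ∑_{b∈B} φ(b*)ψ(b)/|b*| = δ_{φψ} φ(1)/ζ_φ`. -/
theorem stmt3 {A : Type*} [Ring A] [Algebra ℂ A] [StarRing A] [StarModule ℂ A]
    (B : Finset A) (deg : A →ₐ[ℂ] ℂ) (lam : A → A → A → ℝ)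
    (hCA : IsCAlgebra A B deg lam)
    (ζ : A →ₗ[ℂ] ℂ) (hζ : IsStdTrace B deg ζ)
    (Irr : Finset (A → ℂ)) (hIrr : ∀ χ : A → ℂ, χ ∈ Irr ↔ IsIrrChar A χ)
    (m : (A → ℂ) → ℂ) (hm0 : ∀ χ ∈ Irr, m χ ≠ 0)
    (hdec : ∀ a : A, ζ a = ∑ χ ∈ Irr, m χ * χ a)
    (φ ψ : A → ℂ) (hφ : φ ∈ Irr) (hψ : ψ ∈ Irr) :
    (φ = ψ →
      (∑ b ∈ B, deg b)⁻¹ * ∑ b ∈ B, φ (star b) * ψ b / deg (star b) = φ 1 / m φ) ∧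
    (φ ≠ ψ →
      (∑ b ∈ B, deg b)⁻¹ * ∑ b ∈ B, φ (star b) * ψ b / deg (star b) = 0) := by
  have hdual := hCA.isTraceDualBases hζ
  have hIrrChar (χ) (hχ : χ ∈ Irr) : IsIrrChar A χ := (hIrr χ).mp hχ
  have hsum : (∑ b ∈ B, deg b)⁻¹ * ∑ b ∈ B, φ (star b) * ψ b / deg (star b) =
      ∑ b ∈ B, φ (star b) * ψ ((deg b * ∑ c ∈ B, deg c)⁻¹ • b) := by
    obtain ⟨L, rfl⟩ := (hIrrChar ψ hψ).exists_linearMap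
    rw [mul_sum]
    refine sum_congr rfl fun b hb => ?_
    rw [map_smul, smul_eq_mul, hCA.deg_star_of_mem hb, mul_inv]
    ring
  rw [hsum]
  refine ⟨fun h => ?_, fun h => hdual.sum_irrChar_mul_eq_zero (hIrrChar φ hφ) (hIrrChar ψ hψ) h⟩
  subst h
  rw [eq_div_iff (hm0 φ hφ), mul_comm]
  exact hdual.mul_sum_irrChar_mul_self hIrrChar hdec hφ
end

section
/- Let (A,B) be a table algebra and let χ be a character of A, i.e., χ(a) = tr(v ↦ av) for some finite-dimensional A-module. Then |χ(a)| ≤ |a| · χ(1_A) for every a ∈ B. -/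
open Matrix
open scoped BigOperators

/-! Since the structure constants are nonnegative, the powers `a ^ k` of `a ∈ B` lie in the
cone spanned by `B`, and on that cone the norm of any representation is bounded by a constant
times the degree. As `|a ^ k| = |a| ^ k`, the norms of `D (a ^ k)` grow at most like `|a| ^ k`,
so every eigenvalue of `D a` has modulus at most `|a|`; `χ a` is a sum of `χ 1` of them. -/

open scoped NNReal

lemma le_of_forall_pow_le_pow_mul {l d C : ℝ} (hd : 0 < d) (h : ∀ k : ℕ, l ^ k ≤ d ^ k * C) :
    l ≤ d := by
  by_contra! hdl
  have hr : 1 < l / d := (one_lt_div hd).2 hdl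
  obtain ⟨k, hk⟩ := pow_unbounded_of_one_lt C hr
  have hle : (l / d) ^ k ≤ C := by
    rw [div_pow, div_le_iff₀ (by positivity), mul_comm]
    exact h k
  exact hk.not_ge hle

lemma norm_le_of_mem_spectrum_of_norm_pow_le {𝕜 R : Type*} [NormedField 𝕜] [NormedRing R]
    [NormedAlgebra 𝕜 R] [CompleteSpace R] {x : R} {d C : ℝ} (hd : 0 < d)
    (h : ∀ k : ℕ, ‖x ^ k‖ ≤ d ^ k * C) {μ : 𝕜} (hμ : μ ∈ spectrum 𝕜 x) : ‖μ‖ ≤ d := by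
  refine le_of_forall_pow_le_pow_mul hd (C := C * ‖(1 : R)‖) fun k => ?_
  calc ‖μ‖ ^ k = ‖μ ^ k‖ := (norm_pow μ k).symm
    _ ≤ ‖x ^ k‖ * ‖(1 : R)‖ := spectrum.norm_le_norm_mul_of_mem (spectrum.pow_mem_pow x k hμ)
    _ ≤ d ^ k * C * ‖(1 : R)‖ := by gcongr; exact h k
    _ = d ^ k * (C * ‖(1 : R)‖) := mul_assoc _ _ _

lemma Matrix.norm_trace_le_of_forall_mem_spectrum {𝕜 ι : Type*} [NormedField 𝕜] [IsAlgClosed 𝕜]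
    [Fintype ι] [DecidableEq ι] {M : Matrix ι ι 𝕜} {r : ℝ}
    (h : ∀ μ ∈ spectrum 𝕜 M, ‖μ‖ ≤ r) : ‖M.trace‖ ≤ Fintype.card ι * r := by
  have hcard : M.charpoly.roots.card = Fintype.card ι := by
    rw [← M.charpoly_natDegree_eq_dim,
      Polynomial.splits_iff_card_roots.mp (IsAlgClosed.splits M.charpoly)]
  rw [M.trace_eq_sum_roots_charpoly, ← hcard, ← nsmul_eq_mul]
  refine (norm_multiset_sum_le _).trans ?_
  rw [← M.charpoly.roots.card_map (‖·‖)]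
  refine Multiset.sum_le_card_nsmul _ _ fun x hx => ?_
  obtain ⟨μ, hμ, rfl⟩ := Multiset.mem_map.1 hx
  exact h μ (M.mem_spectrum_of_isRoot_charpoly (Polynomial.isRoot_of_mem_roots hμ))

namespace IsCAlgebra

variable {A : Type*} [Ring A] [Algebra ℂ A] [StarRing A] [StarModule ℂ A]
  {B : Finset A} {deg : A →ₐ[ℂ] ℂ} {lam : A → A → A → ℝ}

lemma ofReal_deg_re (hC : IsCAlgebra A B deg lam) {b : A} (hb : b ∈ B) :
    (((deg b).re : ℝ) : ℂ) = deg b := by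
  rw [← hC.lam_one_eq b hb, Complex.ofReal_re]

lemma deg_re_pos (hC : IsCAlgebra A B deg lam) {b : A} (hb : b ∈ B) : 0 < (deg b).re := by
  rw [← hC.lam_one_eq b hb, Complex.ofReal_re]
  exact hC.deg_pos b hb

lemma norm_le_mul_deg_re_of_mem_span (hC : IsCAlgebra A B deg lam) {R : Type*}
    [SeminormedAddCommGroup R] [NormedSpace ℂ R] (f : A →ₗ[ℂ] R) {x : A}
    (hx : x ∈ Submodule.span ℝ≥0 (B : Set A)) :
    ‖f x‖ ≤ (∑ b ∈ B, ‖f b‖ / (deg b).re) * (deg x).re := by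
  set K := ∑ b ∈ B, ‖f b‖ / (deg b).re
  induction hx using Submodule.span_induction with
  | mem b hb =>
    have hpos := hC.deg_re_pos hb
    calc ‖f b‖ = ‖f b‖ / (deg b).re * (deg b).re := by field_simp
      _ ≤ K * (deg b).re := by
        gcongr
        exact Finset.single_le_sum (fun c hc => div_nonneg (norm_nonneg _)
          (hC.deg_re_pos hc).le) hb
  | zero => simp
  | add x y _ _ hx hy =>
    rw [map_add, map_add, Complex.add_re, mul_add]
    exact (norm_add_le _ _).trans (add_le_add hx hy)
  | smul t x _ hx =>
    rw [NNReal.smul_def, ← Complex.coe_smul, map_smul, map_smul, norm_smul, smul_eq_mul,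
      Complex.re_ofReal_mul, Complex.norm_real, NNReal.norm_eq, mul_left_comm]
    exact mul_le_mul_of_nonneg_left hx t.2

end IsCAlgebra

namespace IsTableAlgebra

variable {A : Type*} [Ring A] [Algebra ℂ A] [StarRing A] [StarModule ℂ A]
  {B : Finset A} {deg : A →ₐ[ℂ] ℂ} {lam : A → A → A → ℝ}

lemma mul_mem_span_of_mem (hT : IsTableAlgebra A B deg lam) {a b : A} (ha : a ∈ B) (hb : b ∈ B) :
    a * b ∈ Submodule.span ℝ≥0 (B : Set A) := by
  rw [hT.struct a ha b hb]
  refine Submodule.sum_mem _ fun c hc => ?_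
  have hcoe : (lam a b c : ℂ) • c = (⟨lam a b c, hT.lam_nonneg a ha b hb c hc⟩ : ℝ≥0) • c := by
    rw [Nonneg.mk_smul, Complex.coe_smul]
  rw [hcoe]
  exact Submodule.smul_mem _ _ (Submodule.subset_span hc)

lemma mul_mem_span (hT : IsTableAlgebra A B deg lam) {x y : A}
    (hx : x ∈ Submodule.span ℝ≥0 (B : Set A)) (hy : y ∈ Submodule.span ℝ≥0 (B : Set A)) :
    x * y ∈ Submodule.span ℝ≥0 (B : Set A) := by
  induction hy using Submodule.span_induction with
  | mem b hb =>
    induction hx using Submodule.span_induction with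
    | mem a ha => exact hT.mul_mem_span_of_mem ha hb
    | zero => simp
    | add x x' _ _ hx hx' => rw [add_mul]; exact add_mem hx hx'
    | smul t x _ hx => rw [smul_mul_assoc]; exact Submodule.smul_mem _ t hx
  | zero => simp
  | add y y' _ _ hy hy' => rw [mul_add]; exact add_mem hy hy'
  | smul t y _ hy => rw [mul_smul_comm]; exact Submodule.smul_mem _ t hy

lemma pow_mem_span (hT : IsTableAlgebra A B deg lam) {a : A} (ha : a ∈ B) (k : ℕ) :
    a ^ k ∈ Submodule.span ℝ≥0 (B : Set A) := by
  induction k with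
  | zero => exact pow_zero a ▸ Submodule.subset_span hT.one_mem
  | succ k ih => exact pow_succ a k ▸ hT.mul_mem_span ih (Submodule.subset_span ha)

lemma norm_le_deg_re_of_mem_spectrum (hT : IsTableAlgebra A B deg lam) {R : Type*}
    [NormedRing R] [NormedAlgebra ℂ R] [CompleteSpace R] (f : A →ₐ[ℂ] R) {a : A} (ha : a ∈ B)
    {μ : ℂ} (hμ : μ ∈ spectrum ℂ (f a)) : ‖μ‖ ≤ (deg a).re := by
  refine norm_le_of_mem_spectrum_of_norm_pow_le (hT.deg_re_pos ha)
    (C := ∑ b ∈ B, ‖f b‖ / (deg b).re) (fun k => ?_) hμ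
  have hdeg : (deg (a ^ k)).re = (deg a).re ^ k := by
    rw [map_pow, ← hT.ofReal_deg_re ha, ← Complex.ofReal_pow, Complex.ofReal_re, Complex.ofReal_re]
  rw [← map_pow, ← hdeg, mul_comm]
  exact hT.norm_le_mul_deg_re_of_mem_span f.toLinearMap (hT.pow_mem_span ha k)

end IsTableAlgebra

/-- for any character `χ` of a table algebra and any `a ∈ B`,
`|χ(a)| ≤ |a|·χ(1)` (note `deg a` and `χ 1` are positive reals). -/
theorem stmt12 {A : Type*} [Ring A] [Algebra ℂ A] [StarRing A] [StarModule ℂ A]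
    (B : Finset A) (deg : A →ₐ[ℂ] ℂ) (lam : A → A → A → ℝ)
    (hTA : IsTableAlgebra A B deg lam)
    (χ : A → ℂ)
    (hχ : ∃ (n : ℕ) (D : A →ₐ[ℂ] Matrix (Fin n) (Fin n) ℂ), ∀ x : A, χ x = (D x).trace) :
    ∀ a ∈ B, ‖χ a‖ ≤ (deg a).re * (χ 1).re := by
  intro a ha
  obtain ⟨n, D, hD⟩ := hχ
  let _ : NormedRing (Matrix (Fin n) (Fin n) ℂ) := Matrix.linftyOpNormedRing
  let _ : NormedAlgebra ℂ (Matrix (Fin n) (Fin n) ℂ) := Matrix.linftyOpNormedAlgebra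
  have htrace := Matrix.norm_trace_le_of_forall_mem_spectrum
    fun _ hμ => hTA.norm_le_deg_re_of_mem_spectrum D ha hμ
  rw [hD, hD 1, map_one, Matrix.trace_one, mul_comm]
  simpa using htrace
end

section
/- Let (A,B) be a commutative C-algebra satisfying the standard character condition, and let D : A → Mat_n(ℂ) be a representation affording the standard feasible trace ζ, i.e., a unital ℂ-algebra homomorphism with tr(D(x)) = ζ(x) for all x ∈ A. Then D is injective. -/
open Matrix
open scoped BigOperators

/-!
If `D x = 0` then `ζ (x * star x) = tr (D x * D (star x)) = 0`. But the form
`(x, y) ↦ ζ (x * star y)` is positive definite: by (III) and the vanishing of `ζ` on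
`B ∖ {1}`, the basis `B` is orthogonal for it, with `ζ (b * star b) = |b| |B⁺| > 0`.
-/

namespace IsCAlgebra

variable {A : Type*} [Ring A] [Algebra ℂ A] [StarRing A] [StarModule ℂ A]
  {B : Finset A} {deg : A →ₐ[ℂ] ℂ} {lam : A → A → A → ℝ} {ζ : A →ₗ[ℂ] ℂ}

theorem exists_sum_smul_eq (hCA : IsCAlgebra A B deg lam) (x : A) :
    ∃ f : A → ℂ, ∑ b ∈ B, f b • b = x := by
  have hx : x ∈ Submodule.span ℂ (B : Set A) := hCA.span_top ▸ Submodule.mem_top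
  obtain ⟨f, -, hf⟩ := Submodule.mem_span_finset.mp hx
  exact ⟨f, hf⟩

theorem stdTrace_mul_of_mem (hCA : IsCAlgebra A B deg lam) (hζ : IsStdTrace B deg ζ)
    {a b : A} (ha : a ∈ B) (hb : b ∈ B) : ζ (a * b) = (lam a b 1 : ℂ) * ζ 1 := by
  rw [hCA.struct a ha b hb, map_sum,
    Finset.sum_eq_single_of_mem 1 hCA.one_mem
      fun d hd hd1 => by rw [map_smul, hζ.2 d hd hd1, smul_zero], map_smul, smul_eq_mul]

theorem stdTrace_one (hCA : IsCAlgebra A B deg lam) (hζ : IsStdTrace B deg ζ) :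
    ζ 1 = ((∑ b ∈ B, lam b (star b) 1 : ℝ) : ℂ) := by
  rw [hζ.1, Complex.ofReal_sum]
  exact Finset.sum_congr rfl fun b hb => (hCA.lam_one_eq b hb).symm

theorem stdTrace_mul_star (hCA : IsCAlgebra A B deg lam) (hζ : IsStdTrace B deg ζ)
    (f : A → ℂ) :
    ζ ((∑ b ∈ B, f b • b) * star (∑ b ∈ B, f b • b)) =
      (((∑ b ∈ B, Complex.normSq (f b) * lam b (star b) 1) *
        ∑ b ∈ B, lam b (star b) 1 : ℝ) : ℂ) := by
  have hexpand : (∑ b ∈ B, f b • b) * star (∑ b ∈ B, f b • b) =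
      ∑ b ∈ B, ∑ c ∈ B, (f b * star (f c)) • (b * star c) := by
    simp only [star_sum, star_smul, Finset.sum_mul_sum, smul_mul_smul_comm]
  have hdiag : ∀ b ∈ B, ζ (∑ c ∈ B, (f b * star (f c)) • (b * star c)) =
      ((Complex.normSq (f b) * lam b (star b) 1 : ℝ) : ℂ) * ζ 1 := by
    intro b hb
    simp only [map_sum, map_smul, smul_eq_mul]
    rw [Finset.sum_eq_single_of_mem b hb fun c hc hcb => by
        rw [hCA.stdTrace_mul_of_mem hζ hb (hCA.star_mem c hc),
          hCA.lam_one_ne b hb _ (hCA.star_mem c hc) (by rwa [star_star, ne_comm]),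
          Complex.ofReal_zero, zero_mul, mul_zero],
      hCA.stdTrace_mul_of_mem hζ hb (hCA.star_mem b hb), Complex.star_def, Complex.mul_conj]
    push_cast
    ring
  rw [hexpand, map_sum, Finset.sum_congr rfl hdiag, ← Finset.sum_mul, hCA.stdTrace_one hζ]
  push_cast
  rfl

theorem eq_zero_of_stdTrace_mul_star_eq_zero (hCA : IsCAlgebra A B deg lam)
    (hζ : IsStdTrace B deg ζ) {x : A} (hx : ζ (x * star x) = 0) : x = 0 := by
  obtain ⟨f, rfl⟩ := hCA.exists_sum_smul_eq x
  rw [hCA.stdTrace_mul_star hζ, Complex.ofReal_eq_zero] at hx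
  have hdeg_sum : 0 < ∑ b ∈ B, lam b (star b) 1 :=
    Finset.sum_pos (fun b hb => hCA.deg_pos b hb) ⟨1, hCA.one_mem⟩
  have hterm := (Finset.sum_eq_zero_iff_of_nonneg fun b hb =>
    mul_nonneg (Complex.normSq_nonneg (f b)) (hCA.deg_pos b hb).le).mp
      ((mul_eq_zero.mp hx).resolve_right hdeg_sum.ne')
  refine Finset.sum_eq_zero fun b hb => ?_
  have hfb := (mul_eq_zero.mp (hterm b hb)).resolve_right (hCA.deg_pos b hb).ne'
  rw [Complex.normSq_eq_zero.mp hfb, zero_smul]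

end IsCAlgebra

theorem stmt15_general {A : Type*} [Ring A] [Algebra ℂ A] [StarRing A] [StarModule ℂ A]
    (B : Finset A) (deg : A →ₐ[ℂ] ℂ) (lam : A → A → A → ℝ)
    (hCA : IsCAlgebra A B deg lam)
    (ζ : A →ₗ[ℂ] ℂ) (hζ : IsStdTrace B deg ζ)
    (n : ℕ) (D : A →ₐ[ℂ] Matrix (Fin n) (Fin n) ℂ)
    (hD : ∀ x : A, (D x).trace = ζ x) :
    Function.Injective ⇑D := by
  refine (injective_iff_map_eq_zero D).mpr fun x hx =>
    hCA.eq_zero_of_stdTrace_mul_star_eq_zero hζ ?_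
  rw [← hD, map_mul, hx, zero_mul, trace_zero]

/-- for a commutative C-algebra satisfying the standard character
condition, any matrix representation affording the standard feasible trace `ζ` is
faithful (injective). -/
theorem stmt15 {A : Type*} [Ring A] [Algebra ℂ A] [StarRing A] [StarModule ℂ A]
    (B : Finset A) (deg : A →ₐ[ℂ] ℂ) (lam : A → A → A → ℝ)
    (hCA : IsCAlgebra A B deg lam)
    (hcomm : ∀ x y : A, x * y = y * x)
    (ζ : A →ₗ[ℂ] ℂ) (hζ : IsStdTrace B deg ζ)
    (n : ℕ) (D : A →ₐ[ℂ] Matrix (Fin n) (Fin n) ℂ)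
    (hD : ∀ x : A, (D x).trace = ζ x) :
    Function.Injective ⇑D :=
  stmt15_general B deg lam hCA ζ hζ n D hD
end

section
/- Let (A,B) be a table algebra and let T : A → Mat_X(ℂ) be a unital ℂ-algebra homomorphism (T(1_A) = I) such that: each T(b), b ∈ B, is a nonzero (0,1)-matrix; T(b*) = T(b)ᵀ for every b ∈ B; for distinct b, c ∈ B the matrices T(b) and T(c) never have an entry 1 in the same position; and Σ_{b∈B} T(b) = J, the all-ones matrix. Then |X| = |B⁺| and tr(T(x)) = ζ(x) for all x ∈ A; in particular (A,B) satisfies the standard character condition. -/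
open Matrix
open scoped BigOperators

/-! The matrix `T(1) = I` occupies the diagonal, so by disjointness `T(c)` has zero diagonal
for `c ≠ 1`. For a `(0,1)`-matrix `M`, the diagonal of `M Mᵀ` holds the row sums of `M`;
applied to `T(b) T(b)ᵀ = T(b b*) = ∑_c λ_{b b* c} T(c)` this shows that every row of `T(b)`
sums to `λ_{b b* 1} = |b|`. Summing over `b` and using `∑_b T(b) = J` gives `|X| = |B⁺|`,
and then `tr ∘ T` and `ζ` agree on the basis `B`. -/

namespace Matrix

variable {n R : Type*}

lemma mul_transpose_apply_self_of_zero_or_one [Fintype n] [Semiring R] {M : Matrix n n R}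
    (hM : ∀ i j, M i j = 0 ∨ M i j = 1) (i : n) : (M * Mᵀ) i i = ∑ k, M i k := by
  refine Finset.sum_congr rfl fun k _ => ?_
  rcases hM i k with h | h <;> simp [h]

lemma apply_self_eq_zero_of_disjoint_one [DecidableEq n] [Zero R] [One R] {M : Matrix n n R}
    (hM : ∀ i j, M i j = 0 ∨ M i j = 1)
    (hdisj : ∀ i j, ¬(M i j = 1 ∧ (1 : Matrix n n R) i j = 1)) (i : n) : M i i = 0 :=
  (hM i i).resolve_right fun h => hdisj i i ⟨h, one_apply_eq i⟩

lemma natCast_card_eq_sum_of_sum_eq_of_one [Fintype n] [Nonempty n] [Semiring R] {ι : Type*}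
    {s : Finset ι} {M : ι → Matrix n n R} {d : ι → R}
    (hsum : ∑ b ∈ s, M b = of fun _ _ => 1) (hrow : ∀ b ∈ s, ∀ i, ∑ k, M b i k = d b) :
    (Fintype.card n : R) = ∑ b ∈ s, d b := by
  obtain ⟨i⟩ := ‹Nonempty n›
  have hcol : ∀ k, ∑ b ∈ s, M b i k = 1 := fun k => by
    simpa [sum_apply] using congrFun (congrFun hsum i) k
  calc (Fintype.card n : R) = ∑ k, ∑ b ∈ s, M b i k := by simp [hcol]
    _ = ∑ b ∈ s, d b := by rw [Finset.sum_comm]; exact Finset.sum_congr rfl fun b hb => hrow b hb i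

lemma trace_reindex {m : Type*} [Fintype n] [Fintype m] [AddCommMonoid R] (e : n ≃ m)
    (M : Matrix n n R) : (reindex e e M).trace = M.trace :=
  Fintype.sum_equiv e.symm _ _ fun _ => rfl

end Matrix

lemma AlgHom.exists_fin_trace_eq {R A n : Type*} [CommSemiring R] [Semiring A] [Algebra R A]
    [Fintype n] [DecidableEq n] (T : A →ₐ[R] Matrix n n R) :
    ∃ (k : ℕ) (D : A →ₐ[R] Matrix (Fin k) (Fin k) R), ∀ x, (D x).trace = (T x).trace := by
  let e := Fintype.equivFin n
  exact ⟨_, (Matrix.reindexAlgEquiv R R e).toAlgHom.comp T, fun x => Matrix.trace_reindex e (T x)⟩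

namespace IsCAlgebra

variable {A : Type*} [Ring A] [Algebra ℂ A] [StarRing A] [StarModule ℂ A]
  {B : Finset A} {deg : A →ₐ[ℂ] ℂ} {lam : A → A → A → ℝ}
  {X : Type*} [Fintype X] [DecidableEq X] {T : A →ₐ[ℂ] Matrix X X ℂ}

lemma sum_apply_eq_deg (hA : IsCAlgebra A B deg lam)
    (hdiag : ∀ c ∈ B, c ≠ 1 → ∀ i, T c i i = 0) {b : A} (hb : b ∈ B)
    (hb01 : ∀ i j, T b i j = 0 ∨ T b i j = 1) (hbstar : T (star b) = (T b)ᵀ) (i : X) :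
    ∑ k, T b i k = deg b :=
  calc ∑ k, T b i k = T (b * star b) i i := by
        rw [map_mul, hbstar, Matrix.mul_transpose_apply_self_of_zero_or_one hb01]
    _ = ∑ c ∈ B, (lam b (star b) c : ℂ) * T c i i := by
        rw [hA.struct b hb _ (hA.star_mem b hb)]
        simp only [map_sum, map_smul, Matrix.sum_apply, Matrix.smul_apply, smul_eq_mul]
    _ = lam b (star b) 1 := by
        rw [Finset.sum_eq_single_of_mem 1 hA.one_mem fun c hc hc1 => by simp [hdiag c hc hc1 i]]
        simp
    _ = deg b := hA.lam_one_eq b hb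

lemma trace_apply_eq_of_isStdTrace (hA : IsCAlgebra A B deg lam) {ζ : A →ₗ[ℂ] ℂ}
    (hζ : IsStdTrace B deg ζ) (hcard : (Fintype.card X : ℂ) = ∑ b ∈ B, deg b)
    (hdiag : ∀ c ∈ B, c ≠ 1 → ∀ i, T c i i = 0) (x : A) : (T x).trace = ζ x := by
  suffices (Matrix.traceLinearMap X ℂ ℂ).comp T.toLinearMap = ζ from LinearMap.congr_fun this x
  refine LinearMap.ext_on hA.span_top fun b hb => ?_
  by_cases hb1 : b = 1
  · subst hb1
    simp [hζ.1, ← hcard]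
  · simp [hζ.2 b hb hb1, Matrix.trace, hdiag b hb hb1]

end IsCAlgebra

/-- if `T : A → Mat_X(ℂ)` is a unital representation by pairwise-disjoint
nonzero `(0,1)`-matrices with `T(b*) = T(b)ᵀ` and `∑_b T(b) = J`, then `|X| = |B⁺|` and
`tr ∘ T = ζ`; in particular `(A,B)` satisfies the standard character condition. -/
theorem stmt17 {A : Type*} [Ring A] [Algebra ℂ A] [StarRing A] [StarModule ℂ A]
    (B : Finset A) (deg : A →ₐ[ℂ] ℂ) (lam : A → A → A → ℝ)
    (hTA : IsTableAlgebra A B deg lam)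
    (ζ : A →ₗ[ℂ] ℂ) (hζ : IsStdTrace B deg ζ)
    (X : Type*) [Fintype X] [DecidableEq X]
    (T : A →ₐ[ℂ] Matrix X X ℂ)
    (hne : ∀ b ∈ B, T b ≠ 0)
    (h01 : ∀ b ∈ B, ∀ i j, T b i j = 0 ∨ T b i j = 1)
    (hstar : ∀ b ∈ B, T (star b) = (T b)ᵀ)
    (hdisj : ∀ b ∈ B, ∀ c ∈ B, b ≠ c → ∀ i j, ¬(T b i j = 1 ∧ T c i j = 1))
    (hsum : (∑ b ∈ B, T b) = Matrix.of (fun _ _ => (1 : ℂ))) :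
    (Fintype.card X : ℂ) = (∑ b ∈ B, deg b) ∧
    (∀ x : A, (T x).trace = ζ x) ∧
    -- in particular, the standard character condition holds
    (∃ (k : ℕ) (D : A →ₐ[ℂ] Matrix (Fin k) (Fin k) ℂ), ∀ x : A, (D x).trace = ζ x) := by
  have hdiag : ∀ c ∈ B, c ≠ 1 → ∀ i, T c i i = 0 := fun c hc hc1 =>
    Matrix.apply_self_eq_zero_of_disjoint_one (h01 c hc) (by
      simpa using hdisj c hc 1 hTA.one_mem hc1)
  have : Nonempty X := (isEmpty_or_nonempty X).resolve_left fun _ =>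
    hne 1 hTA.one_mem (Subsingleton.elim _ _)
  have hcard : (Fintype.card X : ℂ) = ∑ b ∈ B, deg b :=
    Matrix.natCast_card_eq_sum_of_sum_eq_of_one hsum fun b hb =>
      hTA.sum_apply_eq_deg hdiag hb (h01 b hb) (hstar b hb)
  have htrace := hTA.trace_apply_eq_of_isStdTrace hζ hcard hdiag
  obtain ⟨k, D, hD⟩ := T.exists_fin_trace_eq
  exact ⟨hcard, htrace, k, D, fun x => (hD x).trans (htrace x)⟩
end
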